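/- arXiv:2507.08976 — 2 statements merged into one kernel-verified Lean document; each statement's English description precedes it below -/
import Mathlib

section
/- In a BCK-algebra, if x ≠ 0 then [x,y] < x for all y, i.e., [x,y] ≤ x and [x,y] ≠ x. -/
/-- A BCK-algebra: a set with binary operation `op` and constant `0`. -/
class BCK (A : Type*) extends Zero A where
  op : A → A → A
  ax1 : ∀ x y z : A, op (op (op x y) (op x z)) (op z y) = 0
  ax2 : ∀ x y : A, op (op x (op x y)) y = 0
  ax3 : ∀ x : A, op x x = 0
  ax4 : ∀ x : A, op 0 x = 0
  ax5 : ∀ x y : A, op x y = 0 → op y x = 0 → x = y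

namespace BCK
variable {A : Type*} [BCK A]

/-- `x ∧ y := y · (y · x)` -/
def meet (x y : A) : A := op y (op y x)

/-- pseudo-commutator `[x,y] := (x ∧ y) · (y ∧ x)` -/
def pcomm (x y : A) : A := op (meet x y) (meet y x)

lemma eq_zero_of_op_zero {a : A} (h : op a 0 = 0) : a = 0 :=
  ax5 a 0 h (ax4 a)

lemma op_zero (a : A) : op a 0 = a := by
  have h1 : op (op a 0) a = 0 := by
    have := ax2 a a; rwa [ax3 a] at this
  have h2 : op a (op a 0) = 0 := by
    have := ax2 a (0 : A)
    exact eq_zero_of_op_zero this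
  exact ax5 _ _ h1 h2

lemma op_le_self (a b : A) : op (op a b) a = 0 := by
  have h := ax1 a b 0
  rw [op_zero, ax4] at h
  exact eq_zero_of_op_zero h

lemma le_trans' {a b c : A} (h1 : op a b = 0) (h2 : op b c = 0) : op a c = 0 := by
  have h := ax1 a c b
  rw [h1, op_zero, h2, op_zero] at h
  exact h

end BCK

/-- If x ≠ 0 then [x,y] < x, i.e. [x,y] ≤ x and [x,y] ≠ x. -/
theorem pcomm_lt_of_ne_zero {A : Type*} [BCK A] (x : A) (hx : x ≠ 0) (y : A) :
    BCK.op (BCK.pcomm x y) x = 0 ∧ BCK.pcomm x y ≠ x := by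
  open BCK in
  have hmle : op (meet x y) x = 0 := ax2 y x
  have hple : op (pcomm x y) (meet x y) = 0 := op_le_self _ _
  constructor
  · exact le_trans' hple hmle
  · intro h
    -- x = pcomm x y ≤ meet x y ≤ x, so meet x y = x
    have hx1 : op x (meet x y) = 0 := by rw [h] at hple; exact hple
    have hmeet : meet x y = x := ax5 _ _ hmle hx1
    -- from meet x y = x : op x y = 0
    have hxy : op x y = 0 := by
      have := op_le_self y (op y x)
      rwa [show op y (op y x) = meet x y from rfl, hmeet] at this
    -- pcomm x y = op x (op x (op x y)) = op x x = 0
    have : pcomm x y = 0 := by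
      unfold pcomm meet
      rw [hxy, op_zero]
      exact ax2 y x
    exact hx (h ▸ this)
end

section
/- If φ : A → B is a surjective BCK-homomorphism, then φ(A') = B', where A' is the derived subalgebra, i.e., the subalgebra generated by all pseudo-commutators. Hence homomorphic images (within BCK) of nilpotent BCK-algebras are nilpotent. -/
namespace BCK
variable {A : Type*} [BCK A]

/-- Membership in the subalgebra generated by a subset. -/
inductive clos (S : Set A) : A → Prop
  | base {x : A} : x ∈ S → clos S x
  | mul {x y : A} : clos S x → clos S y → clos S (op x y)

/-- The lower central series: A₀ = A, A_{k+1} = [A_k, A], the subalgebra generated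
by all pseudo-commutators [x,y] with x ∈ A_k, y ∈ A.  In particular A₁ = [A,A]. -/
def lcs : ℕ → Set A
  | 0 => Set.univ
  | n + 1 => {a | clos {z | ∃ x ∈ lcs n, ∃ y : A, z = pcomm x y} a}

end BCK

namespace BCK
/-- The derived subalgebra A′ = [A,A], generated by all pseudo-commutators. -/
def derivedSub (A : Type*) [BCK A] : Set A :=
  {a | clos {z | ∃ x y : A, z = pcomm x y} a}
end BCK


namespace BCK
variable {A B : Type*} [BCK A] [BCK B]

lemma clos_mono {S T : Set A} (hST : S ⊆ T) {a : A} (h : clos S a) : clos T a := by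
  induction h with
  | base hx => exact clos.base (hST hx)
  | mul _ _ ih1 ih2 => exact clos.mul ih1 ih2

lemma clos_image {f : A → B} (hf : ∀ x y : A, f (op x y) = op (f x) (f y))
    {S : Set A} {a : A} (h : clos S a) : clos (f '' S) (f a) := by
  induction h with
  | base hx => exact clos.base ⟨_, hx, rfl⟩
  | mul _ _ ih1 ih2 => rw [hf]; exact clos.mul ih1 ih2

lemma clos_preimage {f : A → B} (hf : ∀ x y : A, f (op x y) = op (f x) (f y))
    {S : Set A} {T : Set B} (hT : T ⊆ f '' S) {b : B} (h : clos T b) :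
    ∃ a, clos S a ∧ f a = b := by
  induction h with
  | base hx =>
    obtain ⟨a, ha, rfl⟩ := hT hx
    exact ⟨a, clos.base ha, rfl⟩
  | mul _ _ ih1 ih2 =>
    obtain ⟨a1, h1, rfl⟩ := ih1
    obtain ⟨a2, h2, rfl⟩ := ih2
    exact ⟨op a1 a2, clos.mul h1 h2, hf a1 a2⟩

lemma fpcomm {f : A → B} (hf : ∀ x y : A, f (op x y) = op (f x) (f y))
    (x y : A) : f (pcomm x y) = pcomm (f x) (f y) := by
  simp [pcomm, meet, hf]

lemma image_lcs {f : A → B} (hf : ∀ x y : A, f (op x y) = op (f x) (f y))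
    (hsurj : Function.Surjective f) (n : ℕ) : f '' lcs n = lcs n := by
  induction n with
  | zero => simpa [lcs] using hsurj.range_eq
  | succ n ih =>
    ext b
    constructor
    · rintro ⟨a, ha, rfl⟩
      refine clos_mono ?_ (clos_image hf ha)
      rintro z ⟨w, ⟨x, hx, y, rfl⟩, rfl⟩
      exact ⟨f x, ih ▸ ⟨x, hx, rfl⟩, f y, fpcomm hf x y⟩
    · intro hb
      have hsub : {z : B | ∃ x ∈ lcs n, ∃ y : B, z = pcomm x y} ⊆
          f '' {z : A | ∃ x ∈ lcs n, ∃ y : A, z = pcomm x y} := by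
        rintro z ⟨u, hu, v, rfl⟩
        rw [← ih] at hu
        obtain ⟨x, hx, rfl⟩ := hu
        obtain ⟨y, rfl⟩ := hsurj v
        exact ⟨pcomm x y, ⟨x, hx, y, rfl⟩, fpcomm hf x y⟩
      obtain ⟨a, ha, rfl⟩ := clos_preimage hf hsub hb
      exact ⟨a, ha, rfl⟩
end BCK


/-- If f : A → B is a surjective BCK-homomorphism, then f(A′) = B′; hence
homomorphic images (within BCK) of nilpotent BCK-algebras are nilpotent. -/
theorem hom_image_derived {A B : Type*} [BCK A] [BCK B] (f : A → B)
    (hf : ∀ x y : A, f (BCK.op x y) = BCK.op (f x) (f y)) (hf0 : f 0 = 0)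
    (hsurj : Function.Surjective f) :
    f '' BCK.derivedSub A = BCK.derivedSub B ∧
    ((∃ n : ℕ, BCK.lcs n = ({0} : Set A)) →
      (∃ n : ℕ, BCK.lcs n = ({0} : Set B))) := by
  constructor
  · have h1 : BCK.derivedSub A = BCK.lcs 1 := by
      simp [BCK.derivedSub, BCK.lcs]
    have h2 : BCK.derivedSub B = BCK.lcs 1 := by
      simp [BCK.derivedSub, BCK.lcs]
    rw [h1, h2, BCK.image_lcs hf hsurj]
  · rintro ⟨n, hn⟩
    refine ⟨n, ?_⟩
    rw [← BCK.image_lcs hf hsurj n, hn]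
    simp [hf0]
end
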